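/- arXiv:0802.1113 — 8 statements merged into one kernel-verified Lean document; each statement's English description precedes it below -/
import Mathlib

section
/- Correctness of the single-hop Re-Sign algorithm (change of variables): for all μ, x_i, x_j, t ∈ ZMod p with x_j ≠ 0, writing t̃ = t·x_i·x_j⁻¹, the translated signature equals a fresh second-level signature for the delegator: ((g^(μ·x_i))^t, (g^(x_i))^t, (g^(x_i·x_j⁻¹))^t) = (g^(μ·x_j·t̃), g^(x_j·t̃), g^t̃). Here g^μ = H(m), g^(x_i) and g^(x_j) are the two public keys, and g^(x_i·x_j⁻¹) is the re-signature key R_ij. -/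
private lemma pow_val_eq {p : ℕ} [Fact p.Prime] {G : Type*} [CommGroup G]
    (g : G) (hg : orderOf g = p) (a b t : ZMod p) (h : a * t = b) :
    (g ^ a.val) ^ t.val = g ^ b.val := by
  rw [← pow_mul, pow_eq_pow_iff_modEq, hg, ← ZMod.natCast_eq_natCast_iff]
  push_cast
  simp [h]

/-- Correctness of the single-hop Re-Sign algorithm (change of variables):
with `t̃ = t·x_i·x_j⁻¹`, the translated signature
`((g^(μ·x_i))^t, (g^(x_i))^t, (g^(x_i·x_j⁻¹))^t)` equals the fresh second-level
signature `(g^(μ·x_j·t̃), g^(x_j·t̃), g^t̃)`. -/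
theorem stmt_1 {p : ℕ} [Fact p.Prime] {G : Type*} [CommGroup G]
    (g : G) (hg : orderOf g = p)
    (μ xi xj t : ZMod p) (hxj : xj ≠ 0) :
    (g ^ ((μ * xi).val)) ^ (t.val) = g ^ ((μ * xj * (t * xi * xj⁻¹)).val) ∧
    (g ^ (xi.val)) ^ (t.val) = g ^ ((xj * (t * xi * xj⁻¹)).val) ∧
    (g ^ ((xi * xj⁻¹).val)) ^ (t.val) = g ^ ((t * xi * xj⁻¹).val) := by
  refine ⟨pow_val_eq g hg _ _ _ ?_, pow_val_eq g hg _ _ _ ?_, pow_val_eq g hg _ _ _ ?_⟩ <;>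
    field_simp <;> ring
end

section
/- Correctness of level-(ℓ+1) signatures in the multi-hop random-oracle scheme: for every ℓ ≥ 1 and all μ, x, t_1, …, t_ℓ ∈ ZMod p, the tuple (σ_0, …, σ_{2ℓ}) defined by σ_0 = g^(μ·x·t_1⋯t_ℓ), σ_k = g^(x·t_1⋯t_{ℓ+1−k}) for 1 ≤ k ≤ ℓ, and σ_{ℓ+k} = g^(t_k) for 1 ≤ k ≤ ℓ, satisfies all the level-(ℓ+1) verification equations: e(σ_0, g) = e(g^μ, σ_1); e(σ_k, g) = e(σ_{k+1}, σ_{2ℓ−k+1}) for 1 ≤ k ≤ ℓ−1; and e(σ_ℓ, g) = e(g^x, σ_{ℓ+1}). -/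
/-!
Every verification equation compares `e(g^a, g^b)` with `e(g^c, g^d)` where `a * b = c * d`
in `ZMod p`, so bilinearity reduces it to an identity of exponents. For the middle equations
that identity is `x · t₁⋯t_{ℓ+1-k} = (x · t₁⋯t_{ℓ-k}) · t_{ℓ-k+1}`, peeling off the last factor.
-/

section Pairing

variable {n : ℕ} {G GT : Type*} [Monoid G] [Monoid GT] {g : G} {e : G → G → GT}

theorem pairing_eq_of_mul_eq
    (he : ∀ a b : ZMod n, e (g ^ a.val) (g ^ b.val) = e g g ^ (a * b).val)
    {a b c d : ZMod n} (h : a * b = c * d) :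
    e (g ^ a.val) (g ^ b.val) = e (g ^ c.val) (g ^ d.val) := by
  rw [he, he, h]

theorem pairing_generator_right_eq_of_eq_mul [Fact (1 < n)]
    (he : ∀ a b : ZMod n, e (g ^ a.val) (g ^ b.val) = e g g ^ (a * b).val)
    {a c d : ZMod n} (h : a = c * d) :
    e (g ^ a.val) g = e (g ^ c.val) (g ^ d.val) := by
  simpa only [ZMod.val_one, pow_one] using
    pairing_eq_of_mul_eq (b := 1) he (by rw [mul_one, h])

end Pairing

theorem stmt_3_general {p : ℕ} [Fact p.Prime] {G GT : Type*} [CommGroup G] [CommGroup GT]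
    (g : G)
    (e : G → G → GT)
    (he : ∀ a b : ZMod p, e (g ^ (a.val)) (g ^ (b.val)) = e g g ^ ((a * b).val))
    (ℓ : ℕ) (hℓ : 1 ≤ ℓ) (μ x : ZMod p) (t : ℕ → ZMod p)
    (σ : ℕ → G)
    (hσ0 : σ 0 = g ^ ((μ * x * ∏ i ∈ Finset.Icc 1 ℓ, t i).val))
    (hσk : ∀ k, 1 ≤ k → k ≤ ℓ →
      σ k = g ^ ((x * ∏ i ∈ Finset.Icc 1 (ℓ + 1 - k), t i).val))
    (hσt : ∀ k, 1 ≤ k → k ≤ ℓ → σ (ℓ + k) = g ^ ((t k).val)) :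
    e (σ 0) g = e (g ^ (μ.val)) (σ 1) ∧
    (∀ k, 1 ≤ k → k ≤ ℓ - 1 →
      e (σ k) g = e (σ (k + 1)) (σ (2 * ℓ - k + 1))) ∧
    e (σ ℓ) g = e (g ^ (x.val)) (σ (ℓ + 1)) := by
  have : Fact (1 < p) := ⟨(Fact.out : p.Prime).one_lt⟩
  refine ⟨?_, fun k hk1 hkℓ => ?_, ?_⟩
  · rw [hσ0, hσk 1 le_rfl hℓ, Nat.add_sub_cancel]
    exact pairing_generator_right_eq_of_eq_mul he (mul_assoc _ _ _)
  · obtain ⟨m, rfl⟩ : ∃ m, ℓ = k + m + 1 := ⟨ℓ - k - 1, by omega⟩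
    rw [hσk k hk1 (by omega), hσk (k + 1) (by omega) (by omega),
      show 2 * (k + m + 1) - k + 1 = k + m + 1 + (m + 2) by omega,
      hσt (m + 2) (by omega) (by omega),
      show k + m + 1 + 1 - k = (m + 1) + 1 by omega,
      show k + m + 1 + 1 - (k + 1) = m + 1 by omega]
    exact pairing_generator_right_eq_of_eq_mul he
      (by rw [Finset.prod_Icc_succ_top (by omega), mul_assoc])
  · rw [hσk ℓ hℓ le_rfl, hσt 1 le_rfl hℓ, Nat.add_sub_cancel_left, Finset.Icc_self,
      Finset.prod_singleton]
    exact pairing_generator_right_eq_of_eq_mul he rfl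

/-- Correctness of level-(ℓ+1) signatures in the multi-hop random-oracle
scheme: the tuple `σ_0 = g^(μ·x·t_1⋯t_ℓ)`, `σ_k = g^(x·t_1⋯t_{ℓ+1−k})` for
`1 ≤ k ≤ ℓ`, `σ_{ℓ+k} = g^(t_k)` for `1 ≤ k ≤ ℓ`, satisfies all the
level-(ℓ+1) verification equations. -/
theorem stmt_3 {p : ℕ} [Fact p.Prime] {G GT : Type*} [CommGroup G] [CommGroup GT]
    (g : G) (hg : orderOf g = p)
    (e : G → G → GT)
    (he : ∀ a b : ZMod p, e (g ^ (a.val)) (g ^ (b.val)) = e g g ^ ((a * b).val))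
    (ℓ : ℕ) (hℓ : 1 ≤ ℓ) (μ x : ZMod p) (t : ℕ → ZMod p)
    (σ : ℕ → G)
    (hσ0 : σ 0 = g ^ ((μ * x * ∏ i ∈ Finset.Icc 1 ℓ, t i).val))
    (hσk : ∀ k, 1 ≤ k → k ≤ ℓ →
      σ k = g ^ ((x * ∏ i ∈ Finset.Icc 1 (ℓ + 1 - k), t i).val))
    (hσt : ∀ k, 1 ≤ k → k ≤ ℓ → σ (ℓ + k) = g ^ ((t k).val)) :
    e (σ 0) g = e (g ^ (μ.val)) (σ 1) ∧
    (∀ k, 1 ≤ k → k ≤ ℓ - 1 →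
      e (σ k) g = e (σ (k + 1)) (σ (2 * ℓ - k + 1))) ∧
    e (σ ℓ) g = e (g ^ (x.val)) (σ (ℓ + 1)) :=
  stmt_3_general g e he ℓ hℓ μ x t σ hσ0 hσk hσt
end

section
/- Correctness of the multi-hop Re-Sign algorithm (change of variables): fix ℓ ≥ 1 and μ, x_i, x_j, t_1, …, t_ℓ, r_0, …, r_ℓ ∈ ZMod p with x_j ≠ 0. Let the input be the level-(ℓ+1) signature σ_0 = g^(μ·x_i·t_1⋯t_ℓ), σ_k = g^(x_i·t_1⋯t_{ℓ+1−k}) for 1 ≤ k ≤ ℓ, σ_{ℓ+k} = g^(t_k) for 1 ≤ k ≤ ℓ, and define the output σ'_0 = σ_0^(r_0⋯r_ℓ); σ'_k = σ_k^(r_0⋯r_{ℓ+1−k}) for 1 ≤ k ≤ ℓ; σ'_{ℓ+1} = (g^(x_i))^(r_0); σ'_{ℓ+2} = (g^(x_i·x_j⁻¹))^(r_0); σ'_k = σ_{k−2}^(r_{k−ℓ−2}) for ℓ+3 ≤ k ≤ 2ℓ+2. Then, setting t̃_0 = r_0·x_i·x_j⁻¹ and t̃_k = r_k·t_k for 1 ≤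 k ≤ ℓ, the output is a level-(ℓ+2) signature under x_j: σ'_0 = g^(μ·x_j·t̃_0·t̃_1⋯t̃_ℓ), σ'_k = g^(x_j·t̃_0·t̃_1⋯t̃_{ℓ+1−k}) for 1 ≤ k ≤ ℓ+1, and σ'_{ℓ+1+m} = g^(t̃_{m−1}) for 1 ≤ m ≤ ℓ+1. -/
/-!
Every component of the output is `g` raised to a product of exponents, and since `g` has order
`p`, raising `g ^ a.val` to `b.val` is `g ^ (a * b).val`. So the claim reduces to identities in
`ZMod p`, which all follow from the single observation `x_j · t̃_0 = r_0 · x_i`: multiplying the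
new randomness `t̃_0 ⋯ t̃_n` by `x_j` gives back `x_i · (r_0 ⋯ r_n) · (t_1 ⋯ t_n)`.
-/

open Finset

theorem pow_val_pow_val_of_orderOf_eq {M : Type*} [Monoid M] {n : ℕ} {g : M}
    (hg : orderOf g = n) (a b : ZMod n) : (g ^ a.val) ^ b.val = g ^ (a * b).val := by
  rw [← pow_mul, ZMod.val_mul, ← pow_mod_orderOf, hg]

theorem prod_range_succ_eq_mul_prod_Icc {M : Type*} [CommMonoid M] (f : ℕ → M) (n : ℕ) :
    ∏ i ∈ range (n + 1), f i = f 0 * ∏ i ∈ Icc 1 n, f i := by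
  rw [prod_range_eq_mul_Ico f n.add_one_pos, Ico_add_one_right_eq_Icc]

theorem mul_prod_range_succ_of_mul_eq {M : Type*} [CommMonoid M] {x y : M} {t r s : ℕ → M}
    (hs0 : y * s 0 = r 0 * x) (hs : ∀ k, k ≠ 0 → s k = r k * t k) (n : ℕ) :
    y * ∏ i ∈ range (n + 1), s i = x * (∏ i ∈ range (n + 1), r i) * ∏ i ∈ Icc 1 n, t i := by
  have hIcc : ∏ i ∈ Icc 1 n, s i = (∏ i ∈ Icc 1 n, r i) * ∏ i ∈ Icc 1 n, t i := by
    rw [← prod_mul_distrib]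
    exact prod_congr rfl fun i hi => hs i (by grind)
  rw [prod_range_succ_eq_mul_prod_Icc s, prod_range_succ_eq_mul_prod_Icc r, hIcc, ← mul_assoc,
    hs0]
  ac_rfl

theorem stmt_4_general {p : ℕ} [Fact p.Prime] {G : Type*} [CommGroup G]
    (g : G) (hg : orderOf g = p)
    (ℓ : ℕ) (μ xi xj : ZMod p) (hxj : xj ≠ 0)
    (t r : ℕ → ZMod p)
    -- the input level-(ℓ+1) signature
    (σ : ℕ → G)
    (hσ0 : σ 0 = g ^ ((μ * xi * ∏ i ∈ Finset.Icc 1 ℓ, t i).val))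
    (hσk : ∀ k, 1 ≤ k → k ≤ ℓ →
      σ k = g ^ ((xi * ∏ i ∈ Finset.Icc 1 (ℓ + 1 - k), t i).val))
    (hσt : ∀ k, 1 ≤ k → k ≤ ℓ → σ (ℓ + k) = g ^ ((t k).val))
    -- the output of Re-Sign
    (σ' : ℕ → G)
    (hσ'0 : σ' 0 = σ 0 ^ ((∏ i ∈ Finset.range (ℓ + 1), r i).val))
    (hσ'k : ∀ k, 1 ≤ k → k ≤ ℓ →
      σ' k = σ k ^ ((∏ i ∈ Finset.range (ℓ + 2 - k), r i).val))
    (hσ'l1 : σ' (ℓ + 1) = (g ^ (xi.val)) ^ ((r 0).val))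
    (hσ'l2 : σ' (ℓ + 2) = (g ^ ((xi * xj⁻¹).val)) ^ ((r 0).val))
    (hσ'hi : ∀ k, ℓ + 3 ≤ k → k ≤ 2 * ℓ + 2 →
      σ' k = σ (k - 2) ^ ((r (k - ℓ - 2)).val))
    -- the new randomness
    (tt : ℕ → ZMod p)
    (htt : ∀ k, tt k = if k = 0 then r 0 * xi * xj⁻¹ else r k * t k) :
    σ' 0 = g ^ ((μ * xj * ∏ i ∈ Finset.range (ℓ + 1), tt i).val) ∧
    (∀ k, 1 ≤ k → k ≤ ℓ + 1 →
      σ' k = g ^ ((xj * ∏ i ∈ Finset.range (ℓ + 2 - k), tt i).val)) ∧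
    (∀ m, 1 ≤ m → m ≤ ℓ + 1 → σ' (ℓ + 1 + m) = g ^ ((tt (m - 1)).val)) := by
  have hpow := pow_val_pow_val_of_orderOf_eq hg
  have htt0 : tt 0 = r 0 * xi * xj⁻¹ := by rw [htt, if_pos rfl]
  have hprod := mul_prod_range_succ_of_mul_eq (t := t) (r := r) (s := tt)
    (by rw [htt0, mul_comm xj, inv_mul_cancel_right₀ hxj]) (fun k hk => by rw [htt, if_neg hk])
  refine ⟨?_, fun k hk1 hk2 => ?_, fun m hm1 hm2 => ?_⟩
  · rw [hσ'0, hσ0, hpow, mul_assoc μ xj, hprod]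
    congr 2; ring
  · have hsucc : ℓ + 2 - k = ℓ + 1 - k + 1 := by omega
    rw [hsucc, hprod]
    rcases hk2.lt_or_eq with hkℓ | rfl
    · rw [hσ'k k hk1 (by omega), hσk k hk1 (by omega), hpow, ← hsucc]
      congr 2; ring
    · simp [hσ'l1, hpow]
  · rcases hm1.eq_or_lt with rfl | hm
    · rw [hσ'l2, hpow, htt0]
      congr 2; ring
    · rw [hσ'hi _ (by omega) (by omega), show ℓ + 1 + m - 2 = ℓ + (m - 1) by omega,
        hσt _ (by omega) (by omega), hpow, htt, if_neg (by omega),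
        show ℓ + 1 + m - ℓ - 2 = m - 1 by omega, mul_comm]

/-- Correctness of the multi-hop Re-Sign algorithm (change of variables):
re-randomizing a level-(ℓ+1) signature for `x_i` with exponents
`r_0, …, r_ℓ` and the re-signature key `g^(x_i·x_j⁻¹)` yields a level-(ℓ+2)
signature for `x_j` with randomness `t̃_0 = r_0·x_i·x_j⁻¹`, `t̃_k = r_k·t_k`. -/
theorem stmt_4 {p : ℕ} [Fact p.Prime] {G : Type*} [CommGroup G]
    (g : G) (hg : orderOf g = p)
    (ℓ : ℕ) (hℓ : 1 ≤ ℓ) (μ xi xj : ZMod p) (hxj : xj ≠ 0)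
    (t r : ℕ → ZMod p)
    -- the input level-(ℓ+1) signature
    (σ : ℕ → G)
    (hσ0 : σ 0 = g ^ ((μ * xi * ∏ i ∈ Finset.Icc 1 ℓ, t i).val))
    (hσk : ∀ k, 1 ≤ k → k ≤ ℓ →
      σ k = g ^ ((xi * ∏ i ∈ Finset.Icc 1 (ℓ + 1 - k), t i).val))
    (hσt : ∀ k, 1 ≤ k → k ≤ ℓ → σ (ℓ + k) = g ^ ((t k).val))
    -- the output of Re-Sign
    (σ' : ℕ → G)
    (hσ'0 : σ' 0 = σ 0 ^ ((∏ i ∈ Finset.range (ℓ + 1), r i).val))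
    (hσ'k : ∀ k, 1 ≤ k → k ≤ ℓ →
      σ' k = σ k ^ ((∏ i ∈ Finset.range (ℓ + 2 - k), r i).val))
    (hσ'l1 : σ' (ℓ + 1) = (g ^ (xi.val)) ^ ((r 0).val))
    (hσ'l2 : σ' (ℓ + 2) = (g ^ ((xi * xj⁻¹).val)) ^ ((r 0).val))
    (hσ'hi : ∀ k, ℓ + 3 ≤ k → k ≤ 2 * ℓ + 2 →
      σ' k = σ (k - 2) ^ ((r (k - ℓ - 2)).val))
    -- the new randomness
    (tt : ℕ → ZMod p)
    (htt : ∀ k, tt k = if k = 0 then r 0 * xi * xj⁻¹ else r k * t k) :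
    σ' 0 = g ^ ((μ * xj * ∏ i ∈ Finset.range (ℓ + 1), tt i).val) ∧
    (∀ k, 1 ≤ k → k ≤ ℓ + 1 →
      σ' k = g ^ ((xj * ∏ i ∈ Finset.range (ℓ + 2 - k), tt i).val)) ∧
    (∀ m, 1 ≤ m → m ≤ ℓ + 1 → σ' (ℓ + 1 + m) = g ^ ((tt (m - 1)).val)) :=
  stmt_4_general g hg ℓ μ xi xj hxj t r σ hσ0 hσk hσt σ' hσ'0 hσ'k hσ'l1 hσ'l2 hσ'hi tt htt
end

section
/- Perfect unlinkability of multi-hop re-signatures: fix ℓ ≥ 1, μ ∈ ZMod p, nonzero x_i, x_j ∈ ZMod p and nonzero t_1, …, t_ℓ ∈ ZMod p. The pushforward, under the map sending (r_0, …, r_ℓ) to the Re-Sign output tuple (σ_0^(r_0⋯r_ℓ), …) described by σ'_0 = g^(μ·x_i·t_1⋯t_ℓ·r_0⋯r_ℓ), σ'_k = g^(x_i·t_1⋯t_{ℓ+1−k}·r_0⋯r_{ℓ+1−k}) for 1 ≤ k ≤ ℓ, σ'_{ℓ+1} = g^(x_i·r_0), σ'_{ℓ+2} = g^(r_0·x_i·x_j⁻¹),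 σ'_{ℓ+2+m} = g^(t_m·r_m) for 1 ≤ m ≤ ℓ, of the uniform PMF on (ℓ+1)-tuples of nonzero elements of ZMod p, equals the pushforward, under the map sending (s_0, …, s_ℓ) to the fresh level-(ℓ+2) signature (g^(μ·x_j·s_0⋯s_ℓ), g^(x_j·s_0⋯s_ℓ), g^(x_j·s_0⋯s_{ℓ−1}), …, g^(x_j·s_0), g^(s_0), …, g^(s_ℓ)), of the uniform PMF on (ℓ+1)-tuples of nonzero elements of ZMod p. -/
/-!
The substitution `s₀ = (xᵢ / xⱼ) r₀`, `sₘ = tₘ rₘ` (`1 ≤ m ≤ ℓ`) is a bijection of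
`(ZMod p)ˣ ^ (ℓ + 1)` turning every Re-Sign output into the fresh signature with randomizers `s`:
the prefix products satisfy `xⱼ s₀ ⋯ sₙ = xᵢ t₁ ⋯ tₙ r₀ ⋯ rₙ`. Since a bijection preserves the
uniform distribution, both pushforwards agree.
-/

instance nonzero_nonempty (p : ℕ) [Fact p.Prime] : Nonempty {z : ZMod p // z ≠ 0} :=
  ⟨⟨1, one_ne_zero⟩⟩

open Finset

theorem PMF.map_equiv_uniformOfFintype {α : Type*} [Fintype α] [Nonempty α] (e : α ≃ α) :
    PMF.map e (PMF.uniformOfFintype α) = PMF.uniformOfFintype α := by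
  ext b
  rw [PMF.map_apply, tsum_eq_single (e.symm b)]
  · simp
  · intro a ha
    rw [if_neg]
    rintro rfl
    exact ha (e.symm_apply_apply a).symm

def Equiv.piMulLeftNeZero {ι G₀ : Type*} [GroupWithZero G₀] (c : ι → G₀) (hc : ∀ i, c i ≠ 0) :
    (ι → {z : G₀ // z ≠ 0}) ≃ (ι → {z : G₀ // z ≠ 0}) :=
  Equiv.piCongrRight fun i =>
    (Equiv.mulLeft₀ (c i) (hc i)).subtypeEquiv fun z => by simp [hc i]

@[simp]
theorem Equiv.coe_piMulLeftNeZero_apply {ι G₀ : Type*} [GroupWithZero G₀] (c : ι → G₀)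
    (hc : ∀ i, c i ≠ 0) (r : ι → {z : G₀ // z ≠ 0}) (i : ι) :
    (Equiv.piMulLeftNeZero c hc r i : G₀) = c i * r i :=
  rfl

theorem Fin.prod_filter_val_le {M : Type*} [CommMonoid M] (f : ℕ → M) {m n : ℕ} (hn : n < m) :
    ∏ i ∈ univ.filter (fun i : Fin m => i.val ≤ n), f i = ∏ j ∈ range (n + 1), f j := by
  rw [prod_filter, Fin.prod_univ_eq_prod_range (fun j => if j ≤ n then f j else 1), ← prod_filter]
  congr 1
  ext j
  simp only [mem_filter, mem_range]
  omega

section ReSign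

variable {F : Type*} [Field F]

def reSignFactor (xi xj : F) (t : ℕ → F) : ℕ → F
  | 0 => xi * xj⁻¹
  | j + 1 => t (j + 1)

theorem reSignFactor_ne_zero {xi xj : F} (hxi : xi ≠ 0) (hxj : xj ≠ 0) {t : ℕ → F} {ℓ : ℕ}
    (ht : ∀ k, 1 ≤ k → k ≤ ℓ → t k ≠ 0) {j : ℕ} (hj : j ≤ ℓ) : reSignFactor xi xj t j ≠ 0 := by
  cases j with
  | zero => exact mul_ne_zero hxi (inv_ne_zero hxj)
  | succ j => exact ht (j + 1) (by omega) hj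

theorem prod_range_reSignFactor (xi xj : F) (t : ℕ → F) (n : ℕ) :
    ∏ j ∈ range (n + 1), reSignFactor xi xj t j = xi * xj⁻¹ * ∏ j ∈ Icc 1 n, t j := by
  rw [prod_range_eq_mul_Ico _ (show 0 < n + 1 by omega), Ico_add_one_right_eq_Icc]
  congr 1
  refine prod_congr rfl fun j hj => ?_
  obtain ⟨j, rfl⟩ := Nat.exists_eq_add_of_le' (mem_Icc.1 hj).1
  rfl

theorem mul_prod_filter_reSignFactor_mul {xj : F} (hxj : xj ≠ 0) (xi : F) (t : ℕ → F)
    {ℓ n : ℕ} (hn : n ≤ ℓ) (r : Fin (ℓ + 1) → F) :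
    xj * ∏ i ∈ univ.filter (fun i : Fin (ℓ + 1) => i.val ≤ n), reSignFactor xi xj t i * r i
      = xi * (∏ j ∈ Icc 1 n, t j) * ∏ i ∈ univ.filter (fun i : Fin (ℓ + 1) => i.val ≤ n), r i := by
  rw [prod_mul_distrib, Fin.prod_filter_val_le _ (Nat.lt_succ_of_le hn), prod_range_reSignFactor]
  field_simp

theorem mul_prod_reSignFactor_mul {xj : F} (hxj : xj ≠ 0) (xi : F) (t : ℕ → F) {ℓ : ℕ}
    (r : Fin (ℓ + 1) → F) :
    xj * ∏ i : Fin (ℓ + 1), reSignFactor xi xj t i * r i = xi * (∏ j ∈ Icc 1 ℓ, t j) * ∏ i, r i := by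
  have hall : univ.filter (fun i : Fin (ℓ + 1) => i.val ≤ ℓ) = univ :=
    filter_true_of_mem fun i _ => Fin.is_le i
  simpa only [hall] using mul_prod_filter_reSignFactor_mul hxj xi t le_rfl r

end ReSign

/-- Perfect unlinkability of multi-hop re-signatures: the distribution of the
Re-Sign output tuple, over uniform `(r_0,…,r_ℓ)` with nonzero entries, equals
the distribution of a fresh level-(ℓ+2) signature under `x_j`, over uniform
`(s_0,…,s_ℓ)` with nonzero entries. -/
theorem stmt_5 {p : ℕ} [Fact p.Prime] {G : Type*} [CommGroup G]
    (g : G)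
    (ℓ : ℕ) (μ xi xj : ZMod p) (hxi : xi ≠ 0) (hxj : xj ≠ 0)
    (t : ℕ → ZMod p) (ht : ∀ k, 1 ≤ k → k ≤ ℓ → t k ≠ 0)
    -- the Re-Sign output tuple, as a function of the randomizers (r_0, …, r_ℓ)
    (f₁ : (Fin (ℓ + 1) → {z : ZMod p // z ≠ 0}) → (Fin (2 * ℓ + 3) → G))
    (hf₁0 : ∀ r, f₁ r ⟨0, by omega⟩ =
      g ^ ((μ * xi * (∏ i ∈ Finset.Icc 1 ℓ, t i) * ∏ i, (r i).1).val))
    (hf₁k : ∀ r, ∀ k, ∀ _h1 : 1 ≤ k, ∀ _h2 : k ≤ ℓ, f₁ r ⟨k, by omega⟩ =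
      g ^ ((xi * (∏ i ∈ Finset.Icc 1 (ℓ + 1 - k), t i) *
        ∏ i ∈ Finset.univ.filter (fun i : Fin (ℓ + 1) => i.val ≤ ℓ + 1 - k),
          (r i).1).val))
    (hf₁l1 : ∀ r, f₁ r ⟨ℓ + 1, by omega⟩ = g ^ ((xi * (r 0).1).val))
    (hf₁l2 : ∀ r, f₁ r ⟨ℓ + 2, by omega⟩ = g ^ (((r 0).1 * xi * xj⁻¹).val))
    (hf₁m : ∀ r, ∀ m, ∀ h1 : 1 ≤ m, ∀ h2 : m ≤ ℓ, f₁ r ⟨ℓ + 2 + m, by omega⟩ =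
      g ^ ((t m * (r ⟨m, by omega⟩).1).val))
    -- a fresh level-(ℓ+2) signature under x_j, as a function of (s_0, …, s_ℓ)
    (f₂ : (Fin (ℓ + 1) → {z : ZMod p // z ≠ 0}) → (Fin (2 * ℓ + 3) → G))
    (hf₂0 : ∀ s, f₂ s ⟨0, by omega⟩ = g ^ ((μ * xj * ∏ i, (s i).1).val))
    (hf₂k : ∀ s, ∀ k, ∀ _h1 : 1 ≤ k, ∀ _h2 : k ≤ ℓ + 1, f₂ s ⟨k, by omega⟩ =
      g ^ ((xj *
        ∏ i ∈ Finset.univ.filter (fun i : Fin (ℓ + 1) => i.val ≤ ℓ + 1 - k),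
          (s i).1).val))
    (hf₂m : ∀ s, ∀ m, ∀ h1 : m ≤ ℓ, f₂ s ⟨ℓ + 2 + m, by omega⟩ =
      g ^ ((s ⟨m, by omega⟩).1.val)) :
    PMF.map f₁ (PMF.uniformOfFintype (Fin (ℓ + 1) → {z : ZMod p // z ≠ 0}))
      = PMF.map f₂ (PMF.uniformOfFintype (Fin (ℓ + 1) → {z : ZMod p // z ≠ 0})) := by
  set e := Equiv.piMulLeftNeZero (fun i : Fin (ℓ + 1) => reSignFactor xi xj t i)
    fun i => reSignFactor_ne_zero hxi hxj ht (Nat.le_of_lt_succ i.2)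
  suffices key : ∀ r, f₁ r = f₂ (e r) by
    rw [show f₁ = f₂ ∘ e from funext key, ← PMF.map_comp, PMF.map_equiv_uniformOfFintype]
  intro r
  ext ⟨k, hk⟩
  obtain rfl | hk0 := Nat.eq_zero_or_pos k
  · rw [hf₁0, hf₂0, mul_assoc μ xj]
    simp only [e, Equiv.coe_piMulLeftNeZero_apply, mul_prod_reSignFactor_mul hxj, mul_assoc]
  obtain hkℓ | rfl | rfl | hkℓ : k ≤ ℓ ∨ k = ℓ + 1 ∨ k = ℓ + 2 ∨ ℓ + 3 ≤ k := by omega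
  · rw [hf₁k r k hk0 hkℓ, hf₂k _ k hk0 (by omega)]
    simp only [e, Equiv.coe_piMulLeftNeZero_apply,
      mul_prod_filter_reSignFactor_mul hxj xi t (show ℓ + 1 - k ≤ ℓ by omega)]
  · have hfirst : univ.filter (fun i : Fin (ℓ + 1) => i.val ≤ ℓ + 1 - (ℓ + 1)) = {0} := by
      ext i
      simp only [mem_filter, mem_univ, true_and, mem_singleton, Fin.ext_iff, Fin.val_zero]
      omega
    rw [hf₁l1, hf₂k _ (ℓ + 1) hk0 le_rfl, hfirst, prod_singleton]
    change _ = g ^ (xj * (xi * xj⁻¹ * (r 0).1)).val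
    field_simp
  · rw [hf₁l2, hf₂m _ 0 (Nat.zero_le ℓ)]
    change _ = g ^ (xi * xj⁻¹ * (r 0).1).val
    ring_nf
  · obtain ⟨m, rfl⟩ : ∃ m, k = ℓ + 2 + (m + 1) := ⟨k - (ℓ + 3), by omega⟩
    rw [hf₁m r (m + 1) (Nat.succ_pos m) (by omega), hf₂m _ (m + 1) (by omega)]
    rfl
end

section
/- Correctness of the single-hop Re-Sign algorithm in the Waters-based scheme: for all β, φ, x_i, x_j, r, r', t ∈ ZMod p with x_j ≠ 0, let h = g^β, F = g^φ, σ_0 = h^(x_i)·F^r, σ_1 = g^r, X_i = g^(x_i), R_ij = g^(x_i·x_j⁻¹). Then, with r'' = t·r + r' and t̃ = t·x_i·x_j⁻¹, (σ_0^t·F^(r'), σ_1^t·g^(r'), X_i^t, R_ij^t) = (h^(t̃·x_j)·F^(r''), g^(r''), (g^(x_j))^t̃, g^t̃), i.e. the translated signature is a well-formed second-level signature under public key g^(x_j). -/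
/-- Correctness of the single-hop Re-Sign algorithm in the Waters-based
scheme: with `r'' = t·r + r'` and `t̃ = t·x_i·x_j⁻¹`, the translated signature
`(σ_0^t·F^(r'), σ_1^t·g^(r'), X_i^t, R_ij^t)` equals the well-formed
second-level signature `(h^(t̃·x_j)·F^(r''), g^(r''), (g^(x_j))^t̃, g^t̃)`. -/
theorem stmt_12 {p : ℕ} [Fact p.Prime] {G : Type*} [CommGroup G]
    (g : G) (hg : orderOf g = p)
    (β φ xi xj r r' t : ZMod p) (hxj : xj ≠ 0)
    (h F σ₀ σ₁ Xi Rij : G)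
    (hh : h = g ^ (β.val)) (hF : F = g ^ (φ.val))
    (hσ₀ : σ₀ = h ^ (xi.val) * F ^ (r.val)) (hσ₁ : σ₁ = g ^ (r.val))
    (hXi : Xi = g ^ (xi.val)) (hRij : Rij = g ^ ((xi * xj⁻¹).val))
    (r'' t' : ZMod p) (hr'' : r'' = t * r + r') (ht' : t' = t * xi * xj⁻¹) :
    σ₀ ^ (t.val) * F ^ (r'.val) = h ^ ((t' * xj).val) * F ^ (r''.val) ∧
    σ₁ ^ (t.val) * g ^ (r'.val) = g ^ (r''.val) ∧
    Xi ^ (t.val) = (g ^ (xj.val)) ^ (t'.val) ∧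
    Rij ^ (t.val) = g ^ (t'.val) := by
  have hp : p ≠ 0 := (Fact.out : p.Prime).ne_zero
  have key : ∀ a b : ZMod p, (g ^ a.val) ^ b.val = g ^ ((a * b).val) := by
    intro a b
    rw [← pow_mul, pow_eq_pow_iff_modEq, hg, ZMod.val_mul]
    exact (Nat.mod_modEq _ p).symm
  have keym : ∀ a b : ZMod p, g ^ a.val * g ^ b.val = g ^ ((a + b).val) := by
    intro a b
    rw [← pow_add, pow_eq_pow_iff_modEq, hg, ZMod.val_add]
    exact (Nat.mod_modEq _ p).symm
  have hcancel : t' * xj = t * xi := by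
    rw [ht']; field_simp
  subst hh hF hσ₀ hσ₁ hXi hRij hr'' ht'
  refine ⟨?_, ?_, ?_, ?_⟩
  all_goals try simp only [mul_pow, key, keym]
  all_goals congr 1
  all_goals try field_simp
  all_goals ring_nf
end

section
/- Correctness of the multi-hop Re-Sign algorithm in the Waters-based scheme (change of variables): fix ℓ ≥ 1 and β, φ, x_i, x_j, r, r', t_1, …, t_ℓ, r_0, …, r_ℓ ∈ ZMod p with x_j ≠ 0; set h = g^β, F = g^φ. Let the input be σ_0 = h^(x_i·t_1⋯t_ℓ)·F^r, σ_1 = g^r, σ_k = g^(x_i·t_1⋯t_{ℓ+2−k}) for 2 ≤ k ≤ ℓ+1, σ_{ℓ+1+k} = g^(t_k) for 1 ≤ k ≤ ℓ, and define σ'_0 = σ_0^(r_0⋯r_ℓ)·F^(r'); σ'_1 = σ_1^(r_0⋯r_ℓ)·g^(r'); σ'_k = σ_k^(r_0⋯r_{ℓ+2−k}) for 2 ≤ k ≤ ℓ+1; σ'_{ℓ+2} = (g^(x_i))^(r_0); σ'_{ℓ+3} = (g^(x_i·x_j⁻¹))^(r_0); σ'_k = σ_{k−2}^(r_{k−ℓ−3})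 for ℓ+4 ≤ k ≤ 2ℓ+3. Then, with t̃_0 = r_0·x_i·x_j⁻¹, t̃_k = r_k·t_k for 1 ≤ k ≤ ℓ, and r'' = r·r_0⋯r_ℓ + r', the output satisfies σ'_0 = h^(x_j·t̃_0·t̃_1⋯t̃_ℓ)·F^(r''), σ'_1 = g^(r''), σ'_k = g^(x_j·t̃_0·t̃_1⋯t̃_{ℓ+2−k}) for 2 ≤ k ≤ ℓ+2, and σ'_{ℓ+2+m} = g^(t̃_{m−1}) for 1 ≤ m ≤ ℓ+1. -/
/-!
Every component of the output is a power of `g`, of `h` or of `F`, so the claim reduces to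
identities between exponents in `ZMod p`; since these elements have order dividing `p`,
exponentiation by `ZMod.val` turns `+` and `*` in `ZMod p` into `*` and iterated powers in `G`.
The only nontrivial exponent identity is
`x_j · t̃_0 ⋯ t̃_m = x_i · (t_1 ⋯ t_m) · (r_0 ⋯ r_m)`, where `x_j` cancels against the
`x_j⁻¹` in `t̃_0`.
-/

open Finset

section PowVal

variable {M : Type*} [Monoid M] {n : ℕ} {x : M}

theorem pow_val_add_of_pow_eq_one [NeZero n] (hx : x ^ n = 1) (a b : ZMod n) :
    x ^ (a + b).val = x ^ a.val * x ^ b.val := by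
  rw [ZMod.val_add, ← pow_eq_pow_mod _ hx, pow_add]

theorem pow_val_mul_of_pow_eq_one (hx : x ^ n = 1) (a b : ZMod n) :
    x ^ (a * b).val = (x ^ a.val) ^ b.val := by
  rw [ZMod.val_mul, ← pow_eq_pow_mod _ hx, pow_mul]

theorem pow_val_pow_eq_one (hx : x ^ n = 1) (a : ZMod n) : (x ^ a.val) ^ n = 1 := by
  rw [← pow_mul, mul_comm, pow_mul, hx, one_pow]

end PowVal

theorem mul_prod_resigned_randomness {K : Type*} [Field K] {xi xj : K} (hxj : xj ≠ 0)
    {t rr tt : ℕ → K} (htt : ∀ k, tt k = if k = 0 then rr 0 * xi * xj⁻¹ else rr k * t k)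
    (m : ℕ) :
    xj * ∏ i ∈ range (m + 1), tt i = xi * (∏ i ∈ Icc 1 m, t i) * ∏ i ∈ range (m + 1), rr i := by
  have hIcc : ∏ i ∈ Icc 1 m, t i = ∏ i ∈ range m, t (i + 1) := by
    rw [← Ico_add_one_right_eq_Icc, prod_Ico_eq_prod_range]
    simp only [add_tsub_cancel_right, add_comm 1]
  simp only [prod_range_succ' _ m, htt, Nat.succ_ne_zero, if_false, if_true, prod_mul_distrib,
    hIcc]
  field_simp

theorem stmt_14_general {p : ℕ} [Fact p.Prime] {G : Type*} [CommGroup G]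
    (g : G) (hg : orderOf g = p)
    (ℓ : ℕ) (β φ xi xj r r' : ZMod p) (hxj : xj ≠ 0)
    (t rr : ℕ → ZMod p)
    (h F : G) (hh : h = g ^ (β.val)) (hF : F = g ^ (φ.val))
    -- the input level-(ℓ+1) signature
    (σ : ℕ → G)
    (hσ0 : σ 0 = h ^ ((xi * ∏ i ∈ Finset.Icc 1 ℓ, t i).val) * F ^ (r.val))
    (hσ1 : σ 1 = g ^ (r.val))
    (hσk : ∀ k, 2 ≤ k → k ≤ ℓ + 1 →
      σ k = g ^ ((xi * ∏ i ∈ Finset.Icc 1 (ℓ + 2 - k), t i).val))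
    (hσt : ∀ k, 1 ≤ k → k ≤ ℓ → σ (ℓ + 1 + k) = g ^ ((t k).val))
    -- the output of Re-Sign
    (σ' : ℕ → G)
    (hσ'0 : σ' 0 = σ 0 ^ ((∏ i ∈ Finset.range (ℓ + 1), rr i).val) * F ^ (r'.val))
    (hσ'1 : σ' 1 = σ 1 ^ ((∏ i ∈ Finset.range (ℓ + 1), rr i).val) * g ^ (r'.val))
    (hσ'k : ∀ k, 2 ≤ k → k ≤ ℓ + 1 →
      σ' k = σ k ^ ((∏ i ∈ Finset.range (ℓ + 3 - k), rr i).val))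
    (hσ'l2 : σ' (ℓ + 2) = (g ^ (xi.val)) ^ ((rr 0).val))
    (hσ'l3 : σ' (ℓ + 3) = (g ^ ((xi * xj⁻¹).val)) ^ ((rr 0).val))
    (hσ'hi : ∀ k, ℓ + 4 ≤ k → k ≤ 2 * ℓ + 3 →
      σ' k = σ (k - 2) ^ ((rr (k - ℓ - 3)).val))
    -- the new randomness
    (tt : ℕ → ZMod p)
    (htt : ∀ k, tt k = if k = 0 then rr 0 * xi * xj⁻¹ else rr k * t k)
    (r'' : ZMod p) (hr'' : r'' = r * (∏ i ∈ Finset.range (ℓ + 1), rr i) + r') :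
    σ' 0 = h ^ ((xj * ∏ i ∈ Finset.range (ℓ + 1), tt i).val) * F ^ (r''.val) ∧
    σ' 1 = g ^ (r''.val) ∧
    (∀ k, 2 ≤ k → k ≤ ℓ + 2 →
      σ' k = g ^ ((xj * ∏ i ∈ Finset.range (ℓ + 3 - k), tt i).val)) ∧
    (∀ m, 1 ≤ m → m ≤ ℓ + 1 → σ' (ℓ + 2 + m) = g ^ ((tt (m - 1)).val)) := by
  have hp : g ^ p = 1 := hg ▸ pow_orderOf_eq_one g
  have hhp : h ^ p = 1 := hh ▸ pow_val_pow_eq_one hp β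
  have hFp : F ^ p = 1 := hF ▸ pow_val_pow_eq_one hp φ
  have hexp := mul_prod_resigned_randomness hxj htt
  refine ⟨?_, ?_, ?_, ?_⟩
  · rw [hσ'0, hσ0, mul_pow, ← pow_val_mul_of_pow_eq_one hhp, ← pow_val_mul_of_pow_eq_one hFp,
      mul_assoc, ← pow_val_add_of_pow_eq_one hFp, hexp, hr'']
  · rw [hσ'1, hσ1, hr'', pow_val_add_of_pow_eq_one hp, pow_val_mul_of_pow_eq_one hp]
  · intro k hk2 hk
    rw [show ℓ + 3 - k = ℓ + 2 - k + 1 by omega, hexp]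
    rcases hk.lt_or_eq with hk | rfl
    · rw [hσ'k k hk2 (by omega), hσk k hk2 (by omega), ← pow_val_mul_of_pow_eq_one hp,
        show ℓ + 3 - k = ℓ + 2 - k + 1 by omega]
    · rw [hσ'l2, ← pow_val_mul_of_pow_eq_one hp]
      simp
  · intro m hm1 hm
    rcases hm1.eq_or_lt with rfl | hm1
    · rw [hσ'l3, ← pow_val_mul_of_pow_eq_one hp, htt, if_pos rfl]
      ring_nf
    · rw [hσ'hi _ (by omega) (by omega), show ℓ + 2 + m - 2 = ℓ + 1 + (m - 1) by omega,
        hσt _ (by omega) (by omega), ← pow_val_mul_of_pow_eq_one hp, htt, if_neg (by omega),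
        show ℓ + 2 + m - ℓ - 3 = m - 1 by omega, mul_comm]

/-- Correctness of the multi-hop Re-Sign algorithm in the Waters-based scheme
(change of variables): re-randomizing a level-(ℓ+1) Waters signature for `x_i`
with exponents `r_0, …, r_ℓ`, fresh randomness `r'` and the re-signature key
`g^(x_i·x_j⁻¹)` yields a level-(ℓ+2) signature for `x_j` with randomness
`t̃_0 = r_0·x_i·x_j⁻¹`, `t̃_k = r_k·t_k` and `r'' = r·r_0⋯r_ℓ + r'`. -/
theorem stmt_14 {p : ℕ} [Fact p.Prime] {G : Type*} [CommGroup G]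
    (g : G) (hg : orderOf g = p)
    (ℓ : ℕ) (hℓ : 1 ≤ ℓ) (β φ xi xj r r' : ZMod p) (hxj : xj ≠ 0)
    (t rr : ℕ → ZMod p)
    (h F : G) (hh : h = g ^ (β.val)) (hF : F = g ^ (φ.val))
    -- the input level-(ℓ+1) signature
    (σ : ℕ → G)
    (hσ0 : σ 0 = h ^ ((xi * ∏ i ∈ Finset.Icc 1 ℓ, t i).val) * F ^ (r.val))
    (hσ1 : σ 1 = g ^ (r.val))
    (hσk : ∀ k, 2 ≤ k → k ≤ ℓ + 1 →
      σ k = g ^ ((xi * ∏ i ∈ Finset.Icc 1 (ℓ + 2 - k), t i).val))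
    (hσt : ∀ k, 1 ≤ k → k ≤ ℓ → σ (ℓ + 1 + k) = g ^ ((t k).val))
    -- the output of Re-Sign
    (σ' : ℕ → G)
    (hσ'0 : σ' 0 = σ 0 ^ ((∏ i ∈ Finset.range (ℓ + 1), rr i).val) * F ^ (r'.val))
    (hσ'1 : σ' 1 = σ 1 ^ ((∏ i ∈ Finset.range (ℓ + 1), rr i).val) * g ^ (r'.val))
    (hσ'k : ∀ k, 2 ≤ k → k ≤ ℓ + 1 →
      σ' k = σ k ^ ((∏ i ∈ Finset.range (ℓ + 3 - k), rr i).val))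
    (hσ'l2 : σ' (ℓ + 2) = (g ^ (xi.val)) ^ ((rr 0).val))
    (hσ'l3 : σ' (ℓ + 3) = (g ^ ((xi * xj⁻¹).val)) ^ ((rr 0).val))
    (hσ'hi : ∀ k, ℓ + 4 ≤ k → k ≤ 2 * ℓ + 3 →
      σ' k = σ (k - 2) ^ ((rr (k - ℓ - 3)).val))
    -- the new randomness
    (tt : ℕ → ZMod p)
    (htt : ∀ k, tt k = if k = 0 then rr 0 * xi * xj⁻¹ else rr k * t k)
    (r'' : ZMod p) (hr'' : r'' = r * (∏ i ∈ Finset.range (ℓ + 1), rr i) + r') :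
    σ' 0 = h ^ ((xj * ∏ i ∈ Finset.range (ℓ + 1), tt i).val) * F ^ (r''.val) ∧
    σ' 1 = g ^ (r''.val) ∧
    (∀ k, 2 ≤ k → k ≤ ℓ + 2 →
      σ' k = g ^ ((xj * ∏ i ∈ Finset.range (ℓ + 3 - k), tt i).val)) ∧
    (∀ m, 1 ≤ m → m ≤ ℓ + 1 → σ' (ℓ + 2 + m) = g ^ ((tt (m - 1)).val)) :=
  stmt_14_general g hg ℓ β φ xi xj r r' hxj t rr h F hh hF σ hσ0 hσ1 hσk hσt σ' hσ'0 hσ'1 hσ'k hσ'l2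
    hσ'l3 hσ'hi tt htt r'' hr''
end

section
/- Correctness of the Boneh–Boyen-style signing simulation used in the security proof of the Waters-based scheme: for all β, s, J, K, r ∈ ZMod p with J ≠ 0, setting h = g^β, F = h^J·g^K and X = g^s, one has ( X^(−K·J⁻¹)·F^r , X^(−J⁻¹)·g^r ) = ( h^s·F^r̃ , g^r̃ ) where r̃ = r − s·J⁻¹; i.e. the simulator's output is a correctly distributed first-level signature for the (unknown) secret key s. -/
section Aux

variable {p : ℕ} [Fact p.Prime] {G : Type*} [CommGroup G]

private lemma val_pow_eq (g : G) (hg : orderOf g = p) (a b : ZMod p) (hab : a = b) :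
    g ^ a.val = g ^ b.val := by rw [hab]

private lemma pow_val_add (g : G) (hg : orderOf g = p) (a b : ZMod p) :
    g ^ ((a + b).val) = g ^ a.val * g ^ b.val := by
  rw [← pow_add, pow_eq_pow_iff_modEq, hg, ZMod.val_add]
  exact (Nat.mod_modEq _ p)

private lemma pow_val_mul (g : G) (hg : orderOf g = p) (a b : ZMod p) :
    (g ^ a.val) ^ b.val = g ^ ((a * b).val) := by
  rw [← pow_mul, pow_eq_pow_iff_modEq, hg, ZMod.val_mul]
  exact (Nat.mod_modEq _ p).symm

end Aux

/-- Correctness of the Boneh–Boyen-style signing simulation used in the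
security proof of the Waters-based scheme: with `h = g^β`, `F = h^J·g^K`,
`X = g^s` and `J ≠ 0`, the simulator's output
`(X^(−K·J⁻¹)·F^r, X^(−J⁻¹)·g^r)` equals `(h^s·F^r̃, g^r̃)` where
`r̃ = r − s·J⁻¹`. -/
theorem stmt_15 {p : ℕ} [Fact p.Prime] {G : Type*} [CommGroup G]
    (g : G) (hg : orderOf g = p)
    (β s J K r : ZMod p) (hJ : J ≠ 0)
    (h F X : G)
    (hh : h = g ^ (β.val)) (hF : F = h ^ (J.val) * g ^ (K.val))
    (hX : X = g ^ (s.val)) :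
    X ^ ((-(K * J⁻¹)).val) * F ^ (r.val) = h ^ (s.val) * F ^ ((r - s * J⁻¹).val) ∧
    X ^ ((-J⁻¹).val) * g ^ (r.val) = g ^ ((r - s * J⁻¹).val) := by
  subst hh hF hX
  have hF' : (g ^ β.val) ^ J.val * g ^ K.val = g ^ ((β * J + K).val) := by
    rw [pow_val_mul g hg, ← pow_val_add g hg]
  rw [hF']
  constructor
  · rw [pow_val_mul g hg, pow_val_mul g hg, pow_val_mul g hg, pow_val_mul g hg,
      ← pow_val_add g hg, ← pow_val_add g hg]
    apply val_pow_eq g hg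
    field_simp
    ring
  · rw [pow_val_mul g hg, ← pow_val_add g hg]
    apply val_pow_eq g hg
    field_simp
    ring
end

section
/- Collision bound for low-degree polynomials at a random point (used in the generic bilinear group analysis): let p be a prime, k ≥ 1, and let S be a finite set of N pairwise distinct multivariate polynomials in k variables over ZMod p, each of total degree at most 2. Then the number of points x ∈ (ZMod p)^k at which there exist two distinct polynomials P, Q ∈ S with P(x) = Q(x) is at most N²·p^(k−1); equivalently, the probability over a uniformly random x ∈ (ZMod p)^k that some two distinct members of S agree at x is at most N²/p. -/
/-!
Two distinct polynomials `P ≠ Q` of total degree at most 2 agree exactly on the zero set of the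
nonzero polynomial `P - Q`, which by Schwartz–Zippel has at most `2 p^(k-1)` points. A collision
point lies in the agreement set of some unordered pair of distinct members of `S`, and there are
`N.choose 2 ≤ N²/2` such pairs.
-/

open Finset

namespace MvPolynomial

variable {R : Type*} [CommRing R] [IsDomain R] [Fintype R] [DecidableEq R]

theorem card_zeros_mul_card_le {n : ℕ} {f : MvPolynomial (Fin n) R} (hf : f ≠ 0) :
    #{x | eval x f = 0} * Fintype.card R ≤ f.totalDegree * Fintype.card R ^ n := by
  have hsz := schwartz_zippel_totalDegree hf univ
  rw [Fintype.piFinset_univ, card_univ] at hsz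
  have hq : (0 : ℚ≥0) < Fintype.card R := by exact_mod_cast (Fintype.card_pos (α := R))
  rw [div_le_div_iff₀ (pow_pos hq n) hq] at hsz
  exact_mod_cast hsz

/-- For `n = 0` the truncated exponent `n - 1` is harmless: a nonzero constant has no zeros. -/
theorem card_zeros_le {n : ℕ} {f : MvPolynomial (Fin n) R} (hf : f ≠ 0) :
    #{x | eval x f = 0} ≤ f.totalDegree * Fintype.card R ^ (n - 1) := by
  cases n with
  | zero =>
    rw [f.eq_C_of_isEmpty, Ne, C_eq_zero] at *
    simp [hf]
  | succ n =>
    refine Nat.le_of_mul_le_mul_right ?_ (Fintype.card_pos (α := R))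
    simpa [pow_succ, mul_assoc] using card_zeros_mul_card_le hf

end MvPolynomial

theorem Finset.card_filter_exists_ne_eq_le {ι α β : Type*} [Fintype α] [DecidableEq ι]
    [DecidableEq β] (S : Finset ι) (f : ι → α → β) {M : ℕ}
    (hM : ∀ i ∈ S, ∀ j ∈ S, i ≠ j → #{x | f i x = f j x} ≤ M) :
    #{x | ∃ i ∈ S, ∃ j ∈ S, i ≠ j ∧ f i x = f j x} ≤ S.card.choose 2 * M := by
  classical
  calc #{x | ∃ i ∈ S, ∃ j ∈ S, i ≠ j ∧ f i x = f j x}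
      ≤ #((S.powersetCard 2).biUnion fun t => {x | ∃ i ∈ t, ∃ j ∈ t, i ≠ j ∧ f i x = f j x}) := by
        refine card_le_card fun x hx => ?_
        obtain ⟨i, hi, j, hj, hij, hx⟩ := (mem_filter.mp hx).2
        refine mem_biUnion.mpr ⟨{i, j}, ?_, ?_⟩
        · exact mem_powersetCard.mpr ⟨by simp [insert_subset_iff, hi, hj], card_pair hij⟩
        · simp only [mem_filter, mem_univ, true_and]
          exact ⟨i, by simp, j, by simp, hij, hx⟩
    _ ≤ ∑ t ∈ S.powersetCard 2, #{x | ∃ i ∈ t, ∃ j ∈ t, i ≠ j ∧ f i x = f j x} :=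
        card_biUnion_le
    _ ≤ #(S.powersetCard 2) * M := by
        refine sum_le_card_nsmul _ _ _ fun t ht => ?_
        obtain ⟨htS, ht2⟩ := mem_powersetCard.mp ht
        obtain ⟨a, b, hab, rfl⟩ := card_eq_two.mp ht2
        refine (card_le_card fun x hx => ?_).trans (hM a (htS (by simp)) b (htS (by simp)) hab)
        simp only [mem_filter, mem_univ, true_and, mem_insert, mem_singleton] at hx ⊢
        obtain ⟨i, hi, j, hj, hij, hx⟩ := hx
        rcases hi with rfl | rfl <;> rcases hj with rfl | rfl
        exacts [absurd rfl hij, hx, hx.symm, absurd rfl hij]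
    _ = S.card.choose 2 * M := by rw [card_powersetCard]

theorem Nat.choose_two_mul_two_le_sq (n : ℕ) : n.choose 2 * 2 ≤ n ^ 2 := by
  rw [Nat.choose_two_right, sq]
  exact (Nat.div_mul_le_self _ 2).trans (Nat.mul_le_mul_left n (Nat.sub_le n 1))

open MvPolynomial in
theorem stmt_18_general {p : ℕ} (hp : p.Prime) (k : ℕ) (N : ℕ)
    (S : Finset (MvPolynomial (Fin k) (ZMod p)))
    (hdeg : ∀ P ∈ S, P.totalDegree ≤ 2)
    (hN : S.card = N) :
    {x : Fin k → ZMod p | ∃ P ∈ S, ∃ Q ∈ S, P ≠ Q ∧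
        MvPolynomial.eval x P = MvPolynomial.eval x Q}.ncard
      ≤ N ^ 2 * p ^ (k - 1) := by
  classical
  have : Fact p.Prime := ⟨hp⟩
  have hagree : ∀ P ∈ S, ∀ Q ∈ S, P ≠ Q →
      #{x | eval x P = eval x Q} ≤ 2 * p ^ (k - 1) := by
    intro P hP Q hQ hPQ
    have hdiff : (P - Q).totalDegree ≤ 2 :=
      (totalDegree_sub P Q).trans (max_le (hdeg P hP) (hdeg Q hQ))
    calc #{x | eval x P = eval x Q} = #{x | eval x (P - Q) = 0} := by
          simp only [map_sub, sub_eq_zero]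
      _ ≤ (P - Q).totalDegree * p ^ (k - 1) := by
          simpa only [ZMod.card] using card_zeros_le (sub_ne_zero.mpr hPQ)
      _ ≤ 2 * p ^ (k - 1) := by gcongr
  rw [Set.ncard_eq_toFinset_card', Set.toFinset_ofPred]
  calc _ ≤ N.choose 2 * (2 * p ^ (k - 1)) :=
        hN ▸ card_filter_exists_ne_eq_le S (fun P x => eval x P) hagree
    _ = N.choose 2 * 2 * p ^ (k - 1) := by ring
    _ ≤ N ^ 2 * p ^ (k - 1) := by gcongr; exact N.choose_two_mul_two_le_sq

/-- Collision bound for low-degree polynomials at a random point (used in the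
generic bilinear group analysis): if `S` is a finite set of `N` pairwise
distinct multivariate polynomials in `k ≥ 1` variables over `ZMod p` (with `p`
prime), each of total degree at most 2, then the number of points
`x ∈ (ZMod p)^k` at which two distinct members of `S` agree is at most
`N²·p^(k−1)` (equivalently, the probability of a collision at a uniformly
random point is at most `N²/p`). -/
theorem stmt_18 {p : ℕ} (hp : p.Prime) (k : ℕ) (hk : 1 ≤ k) (N : ℕ)
    (S : Finset (MvPolynomial (Fin k) (ZMod p)))
    (hdeg : ∀ P ∈ S, P.totalDegree ≤ 2)
    (hN : S.card = N) :
    {x : Fin k → ZMod p | ∃ P ∈ S, ∃ Q ∈ S, P ≠ Q ∧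
        MvPolynomial.eval x P = MvPolynomial.eval x Q}.ncard
      ≤ N ^ 2 * p ^ (k - 1) :=
  stmt_18_general hp k N S hdeg hN
end
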